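/- Let K ∈ ℝ^{4×4} be the matrix with block form [[0, I₂],[I₂, 0]]. For a, b ∈ ℝ let X(a,b) = a(E_{1,1} + E_{2,2} − E_{3,3} − E_{4,4}) + b(E_{1,2} − E_{4,3}) ∈ ℝ^{4×4}. Then M = {E(X(a,b), 0) : a, b ∈ ℝ} is a maximal abelian subalgebra of the Lie algebra e(K). -/
import Mathlib


open Matrix

/-- `o(K)`: real matrices `X` with `XK + KXᵀ = 0`. -/
def oK {n : ℕ} (K : Matrix (Fin n) (Fin n) ℝ) : Set (Matrix (Fin n) (Fin n) ℝ) :=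
  {X | X * K + K * Xᵀ = 0}

/-- The `(n+1) × (n+1)` matrix `E(X, a)` with block form `[[X, a], [0, 0]]`. -/
def Emat {n : ℕ} (X : Matrix (Fin n) (Fin n) ℝ) (a : Fin n → ℝ) :
    Matrix (Fin (n + 1)) (Fin (n + 1)) ℝ :=
  Matrix.of fun i j =>
    if hi : i.val < n then
      if hj : j.val < n then X ⟨i.val, hi⟩ ⟨j.val, hj⟩ else a ⟨i.val, hi⟩
    else 0

/-- The Lie algebra `e(K)`, as a set of `(n+1) × (n+1)` matrices. -/
def eK {n : ℕ} (K : Matrix (Fin n) (Fin n) ℝ) :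
    Set (Matrix (Fin (n + 1)) (Fin (n + 1)) ℝ) :=
  {m | ∃ X ∈ oK K, ∃ a : Fin n → ℝ, m = Emat X a}

/-- `M` is a maximal abelian subalgebra of the matrix Lie algebra (set) `L`:
it is a linear subspace contained in `L`, its elements pairwise commute, and
every element of `L` commuting with all of `M` belongs to `M`. -/
def IsMASA {κ : Type*} [Fintype κ] (L M : Set (Matrix κ κ ℝ)) : Prop :=
  M ⊆ L ∧
  (∀ X ∈ M, ∀ Y ∈ M, X * Y = Y * X) ∧
  (0 : Matrix κ κ ℝ) ∈ M ∧
  (∀ X ∈ M, ∀ Y ∈ M, X + Y ∈ M) ∧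
  (∀ (c : ℝ), ∀ X ∈ M, c • X ∈ M) ∧
  (∀ Y ∈ L, (∀ X ∈ M, Y * X = X * Y) → Y ∈ M)


lemma Emat_mul {n : ℕ} (X Z : Matrix (Fin n) (Fin n) ℝ) (a b : Fin n → ℝ) :
    Emat X a * Emat Z b = Emat (X * Z) (X *ᵥ b) := by
  ext i j
  simp only [Matrix.mul_apply, Emat, Matrix.of_apply]
  rw [Fin.sum_univ_castSucc]
  by_cases hi : i.val < n <;> by_cases hj : j.val < n <;>
    simp [hi, hj, Matrix.mul_apply, Matrix.mulVec, dotProduct, Fin.castSucc, Fin.is_lt]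

lemma Emat_inj {n : ℕ} {X Z : Matrix (Fin n) (Fin n) ℝ} {a b : Fin n → ℝ}
    (h : Emat X a = Emat Z b) : X = Z ∧ a = b := by
  constructor
  · ext i j
    have := congrFun (congrFun h (Fin.castSucc i)) (Fin.castSucc j)
    simpa [Emat, Fin.castSucc, i.isLt, j.isLt] using this
  · funext i
    have := congrFun (congrFun h (Fin.castSucc i)) (Fin.last n)
    simpa [Emat, Fin.castSucc, i.isLt] using this

lemma Emat_add {n : ℕ} (X Z : Matrix (Fin n) (Fin n) ℝ) (a b : Fin n → ℝ) :
    Emat X a + Emat Z b = Emat (X + Z) (a + b) := by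
  ext i j
  by_cases hi : i.val < n <;> by_cases hj : j.val < n <;> simp [Emat, hi, hj]

lemma Emat_smul {n : ℕ} (c : ℝ) (X : Matrix (Fin n) (Fin n) ℝ) (a : Fin n → ℝ) :
    c • Emat X a = Emat (c • X) (c • a) := by
  ext i j
  by_cases hi : i.val < n <;> by_cases hj : j.val < n <;> simp [Emat, hi, hj]

lemma Emat_zero {n : ℕ} : Emat (0 : Matrix (Fin n) (Fin n) ℝ) 0 = 0 := by
  ext i j
  by_cases hi : i.val < n <;> by_cases hj : j.val < n <;> simp [Emat, hi, hj]
theorem mul_fin_four {α} [AddCommMonoid α] [Mul α]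
    (a₁₁ a₁₂ a₁₃ a₁₄ a₂₁ a₂₂ a₂₃ a₂₄ a₃₁ a₃₂ a₃₃ a₃₄ a₄₁ a₄₂ a₄₃ a₄₄
     b₁₁ b₁₂ b₁₃ b₁₄ b₂₁ b₂₂ b₂₃ b₂₄ b₃₁ b₃₂ b₃₃ b₃₄ b₄₁ b₄₂ b₄₃ b₄₄ : α) :
    !![a₁₁, a₁₂, a₁₃, a₁₄;
       a₂₁, a₂₂, a₂₃, a₂₄;
       a₃₁, a₃₂, a₃₃, a₃₄;
       a₄₁, a₄₂, a₄₃, a₄₄] * !![b₁₁, b₁₂, b₁₃, b₁₄;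
                                b₂₁, b₂₂, b₂₃, b₂₄;
                                b₃₁, b₃₂, b₃₃, b₃₄;
                                b₄₁, b₄₂, b₄₃, b₄₄] =
    !![a₁₁*b₁₁ + a₁₂*b₂₁ + a₁₃*b₃₁ + a₁₄*b₄₁, a₁₁*b₁₂ + a₁₂*b₂₂ + a₁₃*b₃₂ + a₁₄*b₄₂, a₁₁*b₁₃ + a₁₂*b₂₃ + a₁₃*b₃₃ + a₁₄*b₄₃, a₁₁*b₁₄ + a₁₂*b₂₄ + a₁₃*b₃₄ + a₁₄*b₄₄;
       a₂₁*b₁₁ + a₂₂*b₂₁ + a₂₃*b₃₁ + a₂₄*b₄₁, a₂₁*b₁₂ + a₂₂*b₂₂ + a₂₃*b₃₂ + a₂₄*b₄₂, a₂₁*b₁₃ + a₂₂*b₂₃ + a₂₃*b₃₃ + a₂₄*b₄₃, a₂₁*b₁₄ + a₂₂*b₂₄ + a₂₃*b₃₄ + a₂₄*b₄₄;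
       a₃₁*b₁₁ + a₃₂*b₂₁ + a₃₃*b₃₁ + a₃₄*b₄₁, a₃₁*b₁₂ + a₃₂*b₂₂ + a₃₃*b₃₂ + a₃₄*b₄₂, a₃₁*b₁₃ + a₃₂*b₂₃ + a₃₃*b₃₃ + a₃₄*b₄₃, a₃₁*b₁₄ + a₃₂*b₂₄ + a₃₃*b₃₄ + a₃₄*b₄₄;
       a₄₁*b₁₁ + a₄₂*b₂₁ + a₄₃*b₃₁ + a₄₄*b₄₁, a₄₁*b₁₂ + a₄₂*b₂₂ + a₄₃*b₃₂ + a₄₄*b₄₂, a₄₁*b₁₃ + a₄₂*b₂₃ + a₄₃*b₃₃ + a₄₄*b₄₃, a₄₁*b₁₄ + a₄₂*b₂₄ + a₄₃*b₃₄ + a₄₄*b₄₄] := by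
  ext i j
  fin_cases i <;> fin_cases j
    <;> simp [Matrix.mul_apply, Fin.sum_univ_succ, ← add_assoc]

theorem mat4_eq {α} {a₁₁ a₁₂ a₁₃ a₁₄ a₂₁ a₂₂ a₂₃ a₂₄ a₃₁ a₃₂ a₃₃ a₃₄ a₄₁ a₄₂ a₄₃ a₄₄
     b₁₁ b₁₂ b₁₃ b₁₄ b₂₁ b₂₂ b₂₃ b₂₄ b₃₁ b₃₂ b₃₃ b₃₄ b₄₁ b₄₂ b₄₃ b₄₄ : α}
    (h11 : a₁₁ = b₁₁) (h12 : a₁₂ = b₁₂) (h13 : a₁₃ = b₁₃) (h14 : a₁₄ = b₁₄)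
    (h21 : a₂₁ = b₂₁) (h22 : a₂₂ = b₂₂) (h23 : a₂₃ = b₂₃) (h24 : a₂₄ = b₂₄)
    (h31 : a₃₁ = b₃₁) (h32 : a₃₂ = b₃₂) (h33 : a₃₃ = b₃₃) (h34 : a₃₄ = b₃₄)
    (h41 : a₄₁ = b₄₁) (h42 : a₄₂ = b₄₂) (h43 : a₄₃ = b₄₃) (h44 : a₄₄ = b₄₄) :
    !![a₁₁, a₁₂, a₁₃, a₁₄; a₂₁, a₂₂, a₂₃, a₂₄; a₃₁, a₃₂, a₃₃, a₃₄; a₄₁, a₄₂, a₄₃, a₄₄] =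
    !![b₁₁, b₁₂, b₁₃, b₁₄; b₂₁, b₂₂, b₂₃, b₂₄; b₃₁, b₃₂, b₃₃, b₃₄; b₄₁, b₄₂, b₄₃, b₄₄] := by
  subst_vars; rfl

theorem add_fin_four {α} [Add α]
    (a₁₁ a₁₂ a₁₃ a₁₄ a₂₁ a₂₂ a₂₃ a₂₄ a₃₁ a₃₂ a₃₃ a₃₄ a₄₁ a₄₂ a₄₃ a₄₄
     b₁₁ b₁₂ b₁₃ b₁₄ b₂₁ b₂₂ b₂₃ b₂₄ b₃₁ b₃₂ b₃₃ b₃₄ b₄₁ b₄₂ b₄₃ b₄₄ : α) :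
    !![a₁₁, a₁₂, a₁₃, a₁₄; a₂₁, a₂₂, a₂₃, a₂₄; a₃₁, a₃₂, a₃₃, a₃₄; a₄₁, a₄₂, a₄₃, a₄₄] +
    !![b₁₁, b₁₂, b₁₃, b₁₄; b₂₁, b₂₂, b₂₃, b₂₄; b₃₁, b₃₂, b₃₃, b₃₄; b₄₁, b₄₂, b₄₃, b₄₄] =
    !![a₁₁+b₁₁, a₁₂+b₁₂, a₁₃+b₁₃, a₁₄+b₁₄; a₂₁+b₂₁, a₂₂+b₂₂, a₂₃+b₂₃, a₂₄+b₂₄;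
       a₃₁+b₃₁, a₃₂+b₃₂, a₃₃+b₃₃, a₃₄+b₃₄; a₄₁+b₄₁, a₄₂+b₄₂, a₄₃+b₄₃, a₄₄+b₄₄] := by
  ext i j
  fin_cases i <;> fin_cases j <;> rfl

theorem smul_fin_four (c : ℝ)
    (a₁₁ a₁₂ a₁₃ a₁₄ a₂₁ a₂₂ a₂₃ a₂₄ a₃₁ a₃₂ a₃₃ a₃₄ a₄₁ a₄₂ a₄₃ a₄₄ : ℝ) :
    c • (!![a₁₁, a₁₂, a₁₃, a₁₄; a₂₁, a₂₂, a₂₃, a₂₄; a₃₁, a₃₂, a₃₃, a₃₄; a₄₁, a₄₂, a₄₃, a₄₄] :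
      Matrix (Fin 4) (Fin 4) ℝ) =
    !![c*a₁₁, c*a₁₂, c*a₁₃, c*a₁₄; c*a₂₁, c*a₂₂, c*a₂₃, c*a₂₄;
       c*a₃₁, c*a₃₂, c*a₃₃, c*a₃₄; c*a₄₁, c*a₄₂, c*a₄₃, c*a₄₄] := by
  ext i j
  fin_cases i <;> fin_cases j <;> rfl

theorem eta_fin_four {α} (A : Matrix (Fin 4) (Fin 4) α) :
    A = !![A 0 0, A 0 1, A 0 2, A 0 3;
           A 1 0, A 1 1, A 1 2, A 1 3;
           A 2 0, A 2 1, A 2 2, A 2 3;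
           A 3 0, A 3 1, A 3 2, A 3 3] := by
  ext i j
  fin_cases i <;> fin_cases j <;> rfl

theorem zero_fin_four : (0 : Matrix (Fin 4) (Fin 4) ℝ) =
    !![0,0,0,0;0,0,0,0;0,0,0,0;0,0,0,0] := by
  ext i j
  fin_cases i <;> fin_cases j <;> rfl

theorem transpose_fin_four {α : Type*}
    (a₁₁ a₁₂ a₁₃ a₁₄ a₂₁ a₂₂ a₂₃ a₂₄ a₃₁ a₃₂ a₃₃ a₃₄ a₄₁ a₄₂ a₄₃ a₄₄ : α) :
    (!![a₁₁, a₁₂, a₁₃, a₁₄; a₂₁, a₂₂, a₂₃, a₂₄; a₃₁, a₃₂, a₃₃, a₃₄; a₄₁, a₄₂, a₄₃, a₄₄])ᵀ =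
    !![a₁₁, a₂₁, a₃₁, a₄₁; a₁₂, a₂₂, a₃₂, a₄₂; a₁₃, a₂₃, a₃₃, a₄₃; a₁₄, a₂₄, a₃₄, a₄₄] := by
  ext i j
  fin_cases i <;> fin_cases j <;> rfl

theorem mat4_eq_iff {α : Type*} {a₁₁ a₁₂ a₁₃ a₁₄ a₂₁ a₂₂ a₂₃ a₂₄ a₃₁ a₃₂ a₃₃ a₃₄ a₄₁ a₄₂ a₄₃ a₄₄
     b₁₁ b₁₂ b₁₃ b₁₄ b₂₁ b₂₂ b₂₃ b₂₄ b₃₁ b₃₂ b₃₃ b₃₄ b₄₁ b₄₂ b₄₃ b₄₄ : α} :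
    (!![a₁₁, a₁₂, a₁₃, a₁₄; a₂₁, a₂₂, a₂₃, a₂₄; a₃₁, a₃₂, a₃₃, a₃₄; a₄₁, a₄₂, a₄₃, a₄₄] =
     !![b₁₁, b₁₂, b₁₃, b₁₄; b₂₁, b₂₂, b₂₃, b₂₄; b₃₁, b₃₂, b₃₃, b₃₄; b₄₁, b₄₂, b₄₃, b₄₄]) ↔
    (a₁₁ = b₁₁ ∧ a₁₂ = b₁₂ ∧ a₁₃ = b₁₃ ∧ a₁₄ = b₁₄ ∧
     a₂₁ = b₂₁ ∧ a₂₂ = b₂₂ ∧ a₂₃ = b₂₃ ∧ a₂₄ = b₂₄ ∧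
     a₃₁ = b₃₁ ∧ a₃₂ = b₃₂ ∧ a₃₃ = b₃₃ ∧ a₃₄ = b₃₄ ∧
     a₄₁ = b₄₁ ∧ a₄₂ = b₄₂ ∧ a₄₃ = b₄₃ ∧ a₄₄ = b₄₄) := by
  constructor
  · intro h
    exact ⟨congrFun (congrFun h 0) 0, congrFun (congrFun h 0) 1,
      congrFun (congrFun h 0) 2, congrFun (congrFun h 0) 3,
      congrFun (congrFun h 1) 0, congrFun (congrFun h 1) 1,
      congrFun (congrFun h 1) 2, congrFun (congrFun h 1) 3,
      congrFun (congrFun h 2) 0, congrFun (congrFun h 2) 1,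
      congrFun (congrFun h 2) 2, congrFun (congrFun h 2) 3,
      congrFun (congrFun h 3) 0, congrFun (congrFun h 3) 1,
      congrFun (congrFun h 3) 2, congrFun (congrFun h 3) 3⟩
  · rintro ⟨h11, h12, h13, h14, h21, h22, h23, h24,
      h31, h32, h33, h34, h41, h42, h43, h44⟩
    exact mat4_eq h11 h12 h13 h14 h21 h22 h23 h24 h31 h32 h33 h34 h41 h42 h43 h44

set_option maxHeartbeats 1000000 in
/-- `M = {E(X(a,b), 0)}` with `X(a,b) = a(E₁₁+E₂₂-E₃₃-E₄₄) + b(E₁₂-E₄₃)` is a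
maximal abelian subalgebra of `e(K)`, `K = [[0, I₂],[I₂, 0]]`. -/
theorem stmt14 :
    IsMASA (eK (!![0, 0, 1, 0; 0, 0, 0, 1; 1, 0, 0, 0; 0, 1, 0, 0] :
        Matrix (Fin 4) (Fin 4) ℝ))
      {m | ∃ a b : ℝ,
        m = Emat (!![a, b, 0, 0;
                     0, a, 0, 0;
                     0, 0, -a, 0;
                     0, 0, -b, -a] : Matrix (Fin 4) (Fin 4) ℝ) 0} := by
  constructor
  · rintro m ⟨a, b, rfl⟩
    refine ⟨_, ?_, 0, rfl⟩
    show _ * _ + _ * _ = 0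
    rw [transpose_fin_four, mul_fin_four, mul_fin_four, add_fin_four, zero_fin_four]
    apply mat4_eq <;> ring
  refine ⟨?_, ⟨0, 0, ?_⟩, ?_, ?_, ?_⟩
  · rintro m ⟨a, b, rfl⟩ m' ⟨a', b', rfl⟩
    rw [Emat_mul, Emat_mul, Matrix.mulVec_zero, Matrix.mulVec_zero,
      mul_fin_four, mul_fin_four]
    exact congrArg₂ Emat (by apply mat4_eq <;> ring) rfl
  · rw [show (!![(0:ℝ), 0, 0, 0; 0, 0, 0, 0; 0, 0, -0, 0; 0, 0, -0, -0] :
        Matrix (Fin 4) (Fin 4) ℝ) = 0 from by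
      rw [zero_fin_four]; apply mat4_eq <;> norm_num, Emat_zero]
  · rintro m ⟨a, b, rfl⟩ m' ⟨a', b', rfl⟩
    refine ⟨a + a', b + b', ?_⟩
    rw [Emat_add, add_fin_four]
    exact congrArg₂ Emat (by apply mat4_eq <;> ring) (by simp)
  · rintro c m ⟨a, b, rfl⟩
    refine ⟨c * a, c * b, ?_⟩
    rw [Emat_smul, smul_fin_four]
    exact congrArg₂ Emat (by apply mat4_eq <;> ring) (by simp)
  · rintro Y ⟨X, hX, α, rfl⟩ hcomm
    have hXo : X * (!![0, 0, 1, 0; 0, 0, 0, 1; 1, 0, 0, 0; 0, 1, 0, 0] :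
        Matrix (Fin 4) (Fin 4) ℝ) + (!![0, 0, 1, 0; 0, 0, 0, 1; 1, 0, 0, 0; 0, 1, 0, 0] :
        Matrix (Fin 4) (Fin 4) ℝ) * Xᵀ = 0 := hX
    have h1 := hcomm (Emat (!![(1:ℝ), 0, 0, 0; 0, 1, 0, 0; 0, 0, -1, 0; 0, 0, -0, -1]) 0)
      ⟨1, 0, rfl⟩
    have h2 := hcomm (Emat (!![(0:ℝ), 1, 0, 0; 0, 0, 0, 0; 0, 0, -0, 0; 0, 0, -1, -0]) 0)
      ⟨0, 1, rfl⟩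
    rw [Emat_mul, Emat_mul] at h1 h2
    obtain ⟨hc1, hv1⟩ := Emat_inj h1
    obtain ⟨hc2, hv2⟩ := Emat_inj h2
    rw [Matrix.mulVec_zero] at hv1
    have ha0 : α 0 = 0 := by
      have h := congrFun hv1 0
      simp [Matrix.mulVec, dotProduct, Fin.sum_univ_four] at h
      linarith
    have ha1 : α 1 = 0 := by
      have h := congrFun hv1 1
      simp [Matrix.mulVec, dotProduct, Fin.sum_univ_four] at h
      linarith
    have ha2 : α 2 = 0 := by
      have h := congrFun hv1 2
      simp [Matrix.mulVec, dotProduct, Fin.sum_univ_four] at h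
      linarith
    have ha3 : α 3 = 0 := by
      have h := congrFun hv1 3
      simp [Matrix.mulVec, dotProduct, Fin.sum_univ_four] at h
      linarith
    have hα : α = 0 := by
      funext i; fin_cases i <;> simp <;> linarith
    subst hα
    rw [eta_fin_four X] at hXo hc1 hc2
    rw [transpose_fin_four, mul_fin_four, mul_fin_four, add_fin_four, zero_fin_four,
      mat4_eq_iff] at hXo
    rw [mul_fin_four, mul_fin_four, mat4_eq_iff] at hc1 hc2
    obtain ⟨o11, o12, o13, o14, o21, o22, o23, o24, o31, o32, o33, o34, o41, o42, o43, o44⟩ := hXo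
    obtain ⟨c11, c12, c13, c14, c21, c22, c23, c24, c31, c32, c33, c34, c41, c42, c43, c44⟩ := hc1
    obtain ⟨d11, d12, d13, d14, d21, d22, d23, d24, d31, d32, d33, d34, d41, d42, d43, d44⟩ := hc2
    refine ⟨X 0 0, X 0 1, congrArg₂ Emat ?_ rfl⟩
    conv_lhs => rw [eta_fin_four X]
    apply mat4_eq <;>
      linarith [o11, o12, o13, o14, o21, o22, o23, o24, o31, o32, o33, o34, o41, o42, o43, o44,
        c11, c12, c13, c14, c21, c22, c23, c24, c31, c32, c33, c34, c41, c42, c43, c44,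
        d11, d12, d13, d14, d21, d22, d23, d24, d31, d32, d33, d34, d41, d42, d43, d44]
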